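/- Let Γ be a complex Lagrangian subspace of ℂ^{2n} (with respect to ω^ℂ) and let 𝔍 be the ℂ-linear extension of the map e_i ↦ f_i, f_i ↦ −e_i, with Hermitian inner product ⟨v,w⟩ := ω^ℂ(v, 𝔍 w̄). Then 𝔍Γ̄ := {𝔍 v̄ : v ∈ Γ} is also a complex Lagrangian subspace, and Γ and 𝔍Γ̄ are orthogonal with respect to ⟨·,·⟩; hence ℂ^{2n} = Γ ⊕ 𝔍Γ̄, and if {u_1,…,u_n} is a unitary basis of Γ then {u_1,…,u_n, 𝔍ū_1,…,𝔍ū_n} is a unitary basis of ℂ^{2n} which is also a Darboux basis for ω^ℂ. -/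

import Mathlib

/-- `ℂ^{2n}`, with coordinates indexed by `e_1,…,e_n` (`Sum.inl`) and
`f_1,…,f_n` (`Sum.inr`). -/
abbrev V (n : ℕ) := EuclideanSpace ℂ (Fin n ⊕ Fin n)

/-- The ℂ-bilinear extension `ω^ℂ` of the standard symplectic form, with
`ω(e_j, e_k) = ω(f_j, f_k) = 0` and `ω(e_j, f_k) = δ_{jk}`. -/
noncomputable def omegaC (n : ℕ) (v w : V n) : ℂ :=
  ∑ k : Fin n, (v (Sum.inl k) * w (Sum.inr k) - v (Sum.inr k) * w (Sum.inl k))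

/-- A complex Lagrangian subspace of `ℂ^{2n}`: an `n`-dimensional complex
subspace on which `ω^ℂ` vanishes. -/
def IsLagrangian (n : ℕ) (Γ : Submodule ℂ (V n)) : Prop :=
  Module.finrank ℂ Γ = n ∧ ∀ v ∈ Γ, ∀ w ∈ Γ, omegaC n v w = 0

/-- The compatible complex structure `𝔍`: `e_i ↦ f_i`, `f_i ↦ -e_i`,
extended ℂ-linearly. -/
noncomputable def Jmap (n : ℕ) : V n →ₗ[ℂ] V n where
  toFun v := WithLp.toLp 2 (fun c => match c with
    | Sum.inl k => -(v (Sum.inr k))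
    | Sum.inr k => v (Sum.inl k))
  map_add' v w := by ext c; cases c <;> simp <;> ring
  map_smul' a v := by ext c; cases c <;> simp <;> ring

instance : RingHomSurjective (starRingEnd ℂ) :=
  ⟨fun x => ⟨star x, by simp⟩⟩

/-- Coordinatewise complex conjugation (with respect to the real form
`ℝ^{2n}`), as a conjugate-linear map. -/
noncomputable def conjMap (n : ℕ) : V n →ₛₗ[starRingEnd ℂ] V n where
  toFun v := WithLp.toLp 2 (fun c => starRingEnd ℂ (v c))
  map_add' v w := by ext c; simp
  map_smul' a v := by ext c; simp

/-- The Hermitian inner product `⟨v, w⟩ := ω^ℂ(v, 𝔍 w̄)`. -/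
noncomputable def herm (n : ℕ) (v w : V n) : ℂ :=
  omegaC n v (Jmap n (conjMap n w))

/-! The antilinear map `T = 𝔍 ∘ conj` satisfies `T ∘ T = -1` and `ω(Tv, Tw) = conj ω(v, w)`,
and the Hermitian form is the standard inner product of `ℂ^{2n}` with arguments swapped, in which
`⟪Tw, v⟫ = -ω(v, w)`. So for a Lagrangian `Γ`, the image `TΓ` is isotropic of dimension `n` and
lies in `Γᗮ`, which also has dimension `n`; hence `TΓ = Γᗮ`, and the remaining claims come from
the orthogonal decomposition `ℂ^{2n} = Γ ⊕ Γᗮ`. -/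

open scoped InnerProductSpace

theorem Submodule.finrank_map_of_injective_semilinear {K V W : Type*} [DivisionRing K]
    [AddCommGroup V] [Module K V] [AddCommGroup W] [Module K W] {σ : K →+* K}
    [RingHomSurjective σ] {f : V →ₛₗ[σ] W} (hf : Function.Injective f) (p : Submodule K V) :
    Module.finrank K (p.map f) = Module.finrank K p := by
  let j : p ≃+ p.map f := AddEquiv.ofBijective (f.submoduleMap p).toAddMonoidHom
    ⟨fun x y h => Subtype.ext (hf (congrArg Subtype.val h)), f.submoduleMap_surjective p⟩
  unfold Module.finrank
  simpa only [Cardinal.toNat_lift] using congrArg Cardinal.toNat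
    (lift_rank_eq_of_equiv_equiv σ j ⟨σ.injective, RingHomSurjective.is_surjective⟩
      (f.submoduleMap p).map_smulₛₗ).symm

section JmapConj

variable {n : ℕ}

@[simp]
theorem Jmap_conjMap_apply_inl (v : V n) (k : Fin n) :
    Jmap n (conjMap n v) (Sum.inl k) = -starRingEnd ℂ (v (Sum.inr k)) := rfl

@[simp]
theorem Jmap_conjMap_apply_inr (v : V n) (k : Fin n) :
    Jmap n (conjMap n v) (Sum.inr k) = starRingEnd ℂ (v (Sum.inl k)) := rfl

theorem Jmap_conjMap_Jmap_conjMap (v : V n) :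
    Jmap n (conjMap n (Jmap n (conjMap n v))) = -v := by
  ext (k | k) <;> simp

theorem Jmap_comp_conjMap_injective : Function.Injective ((Jmap n).comp (conjMap n)) :=
  fun v w h => neg_injective <| by
    simpa only [LinearMap.comp_apply, Jmap_conjMap_Jmap_conjMap] using
      congrArg (fun x => Jmap n (conjMap n x)) h

theorem omegaC_Jmap_conjMap (v w : V n) :
    omegaC n (Jmap n (conjMap n v)) (Jmap n (conjMap n w)) = starRingEnd ℂ (omegaC n v w) := by
  simp only [omegaC, map_sum]
  refine Finset.sum_congr rfl fun k _ => ?_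
  simp only [Jmap_conjMap_apply_inl, Jmap_conjMap_apply_inr, map_sub, map_mul]
  ring

theorem herm_eq_inner (v w : V n) : herm n v w = ⟪w, v⟫_ℂ := by
  simp only [herm, omegaC, PiLp.inner_apply, Fintype.sum_sum_type, ← Finset.sum_add_distrib,
    Jmap_conjMap_apply_inl, Jmap_conjMap_apply_inr, RCLike.inner_apply]
  refine Finset.sum_congr rfl fun k _ => ?_
  ring

theorem inner_Jmap_conjMap_left (v w : V n) :
    ⟪Jmap n (conjMap n w), v⟫_ℂ = -omegaC n v w := by
  simp only [omegaC, PiLp.inner_apply, Fintype.sum_sum_type, ← Finset.sum_add_distrib,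
    ← Finset.sum_neg_distrib, Jmap_conjMap_apply_inl, Jmap_conjMap_apply_inr,
    RCLike.inner_apply, map_neg, Complex.conj_conj]
  refine Finset.sum_congr rfl fun k _ => ?_
  ring

theorem inner_Jmap_conjMap_Jmap_conjMap (v w : V n) :
    ⟪Jmap n (conjMap n v), Jmap n (conjMap n w)⟫_ℂ = starRingEnd ℂ ⟪v, w⟫_ℂ := by
  simp only [PiLp.inner_apply, Fintype.sum_sum_type, map_add, map_sum,
    Jmap_conjMap_apply_inl, Jmap_conjMap_apply_inr, RCLike.inner_apply, map_neg, map_mul,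
    Complex.conj_conj, neg_mul_neg]
  exact add_comm _ _

theorem IsLagrangian.map_Jmap_comp_conjMap {Γ : Submodule ℂ (V n)} (hΓ : IsLagrangian n Γ) :
    IsLagrangian n (Γ.map ((Jmap n).comp (conjMap n))) := by
  refine ⟨(Submodule.finrank_map_of_injective_semilinear Jmap_comp_conjMap_injective Γ).trans
    hΓ.1, ?_⟩
  rintro _ ⟨v, hv, rfl⟩ _ ⟨w, hw, rfl⟩
  simp only [LinearMap.comp_apply, omegaC_Jmap_conjMap, hΓ.2 v hv w hw, map_zero]

theorem IsLagrangian.map_Jmap_comp_conjMap_eq_orthogonal {Γ : Submodule ℂ (V n)}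
    (hΓ : IsLagrangian n Γ) : Γ.map ((Jmap n).comp (conjMap n)) = Γᗮ := by
  refine Submodule.eq_of_le_of_finrank_eq ?_ ?_
  · rintro _ ⟨w, hw, rfl⟩
    exact (Submodule.mem_orthogonal' _ _).2 fun v hv => by
      rw [LinearMap.comp_apply, inner_Jmap_conjMap_left, hΓ.2 v hv w hw, neg_zero]
  · rw [hΓ.map_Jmap_comp_conjMap.1, Submodule.finrank_add_finrank_orthogonal' (n := n)]
    simp [hΓ.1]

theorem Orthonormal.sum_elim_Jmap_conjMap {ι : Type*} {u : ι → V n} (hu : Orthonormal ℂ u)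
    (hiso : ∀ i j, omegaC n (u i) (u j) = 0) :
    Orthonormal ℂ (Sum.elim u fun i => Jmap n (conjMap n (u i))) := by
  classical
  rw [orthonormal_iff_ite] at hu ⊢
  rintro (i | i) (j | j)
  · simpa using hu i j
  · simp [inner_eq_zero_symm (x := u i), inner_Jmap_conjMap_left, hiso]
  · simp [inner_Jmap_conjMap_left, hiso]
  · simp [inner_Jmap_conjMap_Jmap_conjMap, hu, apply_ite]

end JmapConj

/-- If `Γ` is complex Lagrangian then so is `𝔍Γ̄`; moreover `Γ ⊥ 𝔍Γ̄` for the
Hermitian inner product, `ℂ^{2n} = Γ ⊕ 𝔍Γ̄`, and any unitary basis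
`u_1,…,u_n` of `Γ` extends to a unitary Darboux basis
`u_1,…,u_n,𝔍ū_1,…,𝔍ū_n` of `ℂ^{2n}`. -/
theorem J_conj_lagrangian (n : ℕ) (Γ : Submodule ℂ (V n))
    (hΓ : IsLagrangian n Γ) :
    IsLagrangian n (Submodule.map ((Jmap n).comp (conjMap n)) Γ) ∧
    (∀ v ∈ Γ, ∀ w ∈ Submodule.map ((Jmap n).comp (conjMap n)) Γ,
      herm n v w = 0) ∧
    IsCompl Γ (Submodule.map ((Jmap n).comp (conjMap n)) Γ) ∧
    (∀ u : Fin n → V n, (∀ i, u i ∈ Γ) →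
      (∀ i j, herm n (u i) (u j) = if i = j then 1 else 0) →
      (∀ a a' : Fin n ⊕ Fin n,
        herm n (Sum.elim u (fun i => Jmap n (conjMap n (u i))) a)
          (Sum.elim u (fun i => Jmap n (conjMap n (u i))) a') =
            if a = a' then 1 else 0) ∧
      Submodule.span ℂ
        (Set.range (Sum.elim u (fun i => Jmap n (conjMap n (u i))))) = ⊤ ∧
      (∀ i j : Fin n,
        omegaC n (u i) (u j) = 0 ∧
        omegaC n (Jmap n (conjMap n (u i))) (Jmap n (conjMap n (u j))) = 0 ∧
        omegaC n (u i) (Jmap n (conjMap n (u j))) =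
          if i = j then 1 else 0)) := by
  have horth := hΓ.map_Jmap_comp_conjMap_eq_orthogonal
  refine ⟨hΓ.map_Jmap_comp_conjMap, fun v hv w hw => ?_, horth ▸ Γ.isCompl_orthogonal,
    fun u hu hunit => ?_⟩
  · rw [horth] at hw
    rw [herm_eq_inner, inner_eq_zero_symm]
    exact hw v hv
  have hiso : ∀ i j, omegaC n (u i) (u j) = 0 := fun i j => hΓ.2 _ (hu i) _ (hu j)
  have hu_on : Orthonormal ℂ u := orthonormal_iff_ite.2 fun i j => by
    simp only [← herm_eq_inner, hunit, eq_comm]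
  have hbasis := hu_on.sum_elim_Jmap_conjMap hiso
  refine ⟨fun a a' => ?_, ?_, fun i j => ⟨hiso i j, ?_, hunit i j⟩⟩
  · simp only [herm_eq_inner, orthonormal_iff_ite.1 hbasis, eq_comm]
  · exact hbasis.linearIndependent.span_eq_top_of_card_eq_finrank' (by simp)
  · rw [omegaC_Jmap_conjMap, hiso, map_zero]
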